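/- For every nonnegative integer n, the sum for i from 1 to n of binom(4i, 2i−1) · binom(4n−4i, 2n−2i) equals the sum for i from 0 to n−1 of binom(4i+2, 2i+1) · binom(4n−4i−2, 2n−2i−1). -/

import Mathlib

/-!
Write `c k = binom(2k, k)`. For `i ≥ 1` Pascal's rule gives `c (2i+1) = 2 (binom(4i, 2i-1) + c (2i))`,
so twice the left-hand side plus twice the even part `∑ c (2i) c (2n-2i)` of the convolution
`∑ₖ c k c (2n-k) = 4^(2n)` is `∑ c (2i+1) c (2n-2i)`. By the symmetry `k ↦ 2n+1-k` this is half of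
`∑ₖ c k c (2n+1-k) = 4^(2n+1)`, i.e. twice the whole convolution `∑ₖ c k c (2n-k)`, and the
right-hand side is its odd part. The convolution identity `∑ₖ c k c (M-k) = 4^M` holds because the
generating function `C` of the `c k` satisfies `(1 - 4x) C' = 2C`, hence `(1 - 4x) (C²)' = 4C²`.
-/

open Finset PowerSeries

namespace PowerSeries

variable {R : Type*} [CommSemiring R]

theorem coeff_X_mul_derivative (f : R⟦X⟧) (n : ℕ) :
    coeff n (X * d⁄dX R f) = n • coeff n f := by
  cases n with
  | zero => simp
  | succ m => simp [coeff_succ_X_mul, coeff_derivative, nsmul_eq_mul, mul_comm]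

/-- The equation is `(1 - a X) f' = a f` written without subtraction. -/
theorem coeff_eq_pow_mul_constantCoeff_of_derivative_eq [IsAddTorsionFree R] {f : R⟦X⟧} {a : R}
    (h : d⁄dX R f = a • (X * d⁄dX R f + f)) (n : ℕ) :
    coeff n f = a ^ n * constantCoeff f := by
  induction n with
  | zero => simp
  | succ n ih =>
    have hn : (n + 1) • coeff (n + 1) f = (n + 1) • (a * coeff n f) := by
      have := congrArg (coeff n) h
      rw [coeff_smul, map_add, coeff_X_mul_derivative, coeff_derivative, ← succ_nsmul,
        smul_eq_mul] at this
      rw [nsmul_eq_mul, mul_comm, Nat.cast_succ, this, mul_smul_comm]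
    rw [IsAddTorsionFree.nsmul_right_injective n.succ_ne_zero hn, ih, pow_succ]
    ring

end PowerSeries

theorem Finset.sum_range_two_mul {M : Type*} [AddCommMonoid M] (f : ℕ → M) (n : ℕ) :
    ∑ k ∈ range (2 * n), f k = ∑ i ∈ range n, f (2 * i) + ∑ i ∈ range n, f (2 * i + 1) := by
  induction n with
  | zero => simp
  | succ n ih =>
    rw [mul_add_one, sum_range_succ, sum_range_succ, ih, sum_range_succ, sum_range_succ]
    abel

noncomputable def centralBinomSeries : ℕ⟦X⟧ := mk Nat.centralBinom

theorem derivative_centralBinomSeries :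
    d⁄dX ℕ centralBinomSeries = 2 • (2 • (X * d⁄dX ℕ centralBinomSeries) + centralBinomSeries) := by
  ext k
  simp only [coeff_derivative, map_nsmul, map_add, coeff_X_mul_derivative, centralBinomSeries,
    coeff_mk, smul_eq_mul]
  linarith [Nat.succ_mul_centralBinom_succ k]

theorem derivative_centralBinomSeries_sq :
    d⁄dX ℕ (centralBinomSeries ^ 2) =
      4 • (X * d⁄dX ℕ (centralBinomSeries ^ 2) + centralBinomSeries ^ 2) := by
  set C := centralBinomSeries
  have hsq : d⁄dX ℕ (C ^ 2) = 2 * C * d⁄dX ℕ C := by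
    rw [derivative_pow]; norm_num
  calc d⁄dX ℕ (C ^ 2) = 2 * C * d⁄dX ℕ C := hsq
    _ = 2 * C * (2 • (2 • (X * d⁄dX ℕ C) + C)) := by rw [← derivative_centralBinomSeries]
    _ = 4 • (X * (2 * C * d⁄dX ℕ C) + C ^ 2) := by ring
    _ = _ := by rw [hsq]

namespace Nat

theorem sum_range_centralBinom_mul_centralBinom (M : ℕ) :
    ∑ k ∈ range (M + 1), centralBinom k * centralBinom (M - k) = 4 ^ M := by
  have h := coeff_eq_pow_mul_constantCoeff_of_derivative_eq derivative_centralBinomSeries_sq M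
  rw [sq, coeff_mul, Finset.Nat.sum_antidiagonal_eq_sum_range_succ
    (fun i j => coeff i centralBinomSeries * coeff j centralBinomSeries)] at h
  simpa [centralBinomSeries] using h

theorem sum_range_centralBinom_even_add_odd (n : ℕ) :
    ∑ i ∈ range (n + 1), centralBinom (2 * i) * centralBinom (2 * n - 2 * i) +
      ∑ i ∈ range n, centralBinom (2 * i + 1) * centralBinom (2 * n - 2 * i - 1) = 4 ^ (2 * n) := by
  rw [← sum_range_centralBinom_mul_centralBinom, sum_range_succ _ (2 * n), sum_range_two_mul,
    sum_range_succ _ n]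
  simp only [Nat.sub_sub, Nat.sub_self]
  abel

theorem two_mul_sum_range_centralBinom_odd_mul_even (n : ℕ) :
    2 * ∑ i ∈ range (n + 1), centralBinom (2 * i + 1) * centralBinom (2 * n - 2 * i) =
      4 ^ (2 * n + 1) := by
  have hreflect : ∑ i ∈ range (n + 1), centralBinom (2 * i) * centralBinom (2 * n + 1 - 2 * i) =
      ∑ i ∈ range (n + 1), centralBinom (2 * i + 1) * centralBinom (2 * n - 2 * i) := by
    rw [← sum_range_reflect]
    refine sum_congr rfl fun i hi => ?_
    have hin := mem_range.mp hi
    rw [mul_comm, show 2 * (n + 1 - 1 - i) = 2 * n - 2 * i by omega,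
      show 2 * n + 1 - (2 * n - 2 * i) = 2 * i + 1 by omega]
  rw [← sum_range_centralBinom_mul_centralBinom, show 2 * n + 1 + 1 = 2 * (n + 1) by ring,
    sum_range_two_mul, hreflect]
  simp only [Nat.add_sub_add_right]
  exact two_mul _

theorem centralBinom_succ_eq_two_mul {m : ℕ} (hm : 0 < m) :
    centralBinom (m + 1) = 2 * ((2 * m).choose (m - 1) + centralBinom m) := by
  obtain ⟨j, rfl⟩ := Nat.exists_eq_add_of_lt hm
  simp only [centralBinom_eq_two_mul_choose, zero_add, add_tsub_cancel_right]
  rw [show 2 * (j + 1 + 1) = (2 * (j + 1) + 1) + 1 by ring, choose_succ_succ', choose_symm_half,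
    choose_succ_succ']
  ring

theorem sum_range_centralBinom_odd_mul_even (n : ℕ) :
    ∑ i ∈ range (n + 1), centralBinom (2 * i + 1) * centralBinom (2 * n - 2 * i) =
      2 * ∑ i ∈ Icc 1 n, (4 * i).choose (2 * i - 1) * centralBinom (2 * n - 2 * i) +
        2 * ∑ i ∈ range (n + 1), centralBinom (2 * i) * centralBinom (2 * n - 2 * i) := by
  have hterm : ∀ i ∈ Icc 1 n, centralBinom (2 * i + 1) * centralBinom (2 * n - 2 * i) =
      2 * ((4 * i).choose (2 * i - 1) * centralBinom (2 * n - 2 * i)) +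
        2 * (centralBinom (2 * i) * centralBinom (2 * n - 2 * i)) := by
    intro i hi
    have hpascal := centralBinom_succ_eq_two_mul (m := 2 * i) (by grind)
    rw [show 2 * (2 * i) = 4 * i by ring] at hpascal
    rw [hpascal]
    ring
  have hpos : 0 < n + 1 := n.succ_pos
  rw [range_eq_Ico, sum_eq_sum_Ico_succ_bot hpos, sum_eq_sum_Ico_succ_bot hpos, zero_add,
    Ico_add_one_right_eq_Icc, sum_congr rfl hterm, sum_add_distrib, ← mul_sum, ← mul_sum]
  simp only [centralBinom, mul_zero, zero_add, mul_one, choose_succ_self_right, reduceAdd,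
    tsub_zero, choose_self, one_mul]
  ring

end Nat

/-- For every nonnegative integer `n`,
`∑_{i=1}^{n} binom(4i, 2i−1) binom(4n−4i, 2n−2i)
  = ∑_{i=0}^{n−1} binom(4i+2, 2i+1) binom(4n−4i−2, 2n−2i−1)`. -/
theorem binom_identity (n : ℕ) :
    ∑ i ∈ Finset.Icc 1 n, (4 * i).choose (2 * i - 1) * (4 * n - 4 * i).choose (2 * n - 2 * i) =
      ∑ i ∈ Finset.range n,
        (4 * i + 2).choose (2 * i + 1) * (4 * n - 4 * i - 2).choose (2 * n - 2 * i - 1) := by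
  have hL : ∀ i ∈ Icc 1 n, (4 * i).choose (2 * i - 1) * (4 * n - 4 * i).choose (2 * n - 2 * i) =
      (4 * i).choose (2 * i - 1) * (2 * n - 2 * i).centralBinom := by
    intro i _
    rw [Nat.centralBinom_eq_two_mul_choose, show 2 * (2 * n - 2 * i) = 4 * n - 4 * i by omega]
  have hR : ∀ i ∈ range n,
      (4 * i + 2).choose (2 * i + 1) * (4 * n - 4 * i - 2).choose (2 * n - 2 * i - 1) =
        (2 * i + 1).centralBinom * (2 * n - 2 * i - 1).centralBinom := by
    intro i _
    rw [Nat.centralBinom_eq_two_mul_choose, Nat.centralBinom_eq_two_mul_choose,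
      show 2 * (2 * i + 1) = 4 * i + 2 by ring,
      show 2 * (2 * n - 2 * i - 1) = 4 * n - 4 * i - 2 by omega]
  rw [sum_congr rfl hL, sum_congr rfl hR]
  have hEvenOdd := Nat.sum_range_centralBinom_even_add_odd n
  have hMixed := Nat.two_mul_sum_range_centralBinom_odd_mul_even n
  rw [Nat.sum_range_centralBinom_odd_mul_even, pow_succ] at hMixed
  omega
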